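/- arXiv:2605.25932 — 4 statements merged into one kernel-verified Lean document; each statement's English description precedes it below -/
import Mathlib

section
/- Let z : ℝ³ → ℝ³ be continuously differentiable near a point x with div z(x) = 0, and let ℓ : ℝ³ → ℝ be twice continuously differentiable near x. Then −(∇ℓ(x) × z(x)) · (curl z)(x) = −div(z × (∇ℓ × z))(x) + (1/2) Δℓ(x) |z(x)|² + (1/2) div(∇ℓ |z|²)(x) − Hess ℓ(x)(z(x), z(x)), where z × (∇ℓ × z) denotes the vector field x ↦ z(x) × (∇ℓ(x) × z(x)) and ∇ℓ|z|² the vector field x ↦ |z(x)|² ∇ℓ(x). -/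
/-!
Both sides equal `∇ℓ · ((z·∇)z - ∇(|z|²/2))`. On the left this is the scalar triple product
combined with the Lamb identity `z × curl z = ∇(|z|²/2) - (z·∇)z`. On the right, expand
`z × (∇ℓ × z) = |z|² ∇ℓ - (∇ℓ·z) z` and apply the product rule for the divergence: `div z = 0`
removes one term, and `z·∇(∇ℓ·z) = Hess ℓ(z,z) + ∇ℓ·((z·∇)z)` produces the Hessian that cancels.
-/

noncomputable section

/-- Euclidean dot product on `ℝ³`. -/
def dot3 (a b : Fin 3 → ℝ) : ℝ := ∑ i, a i * b i

/-- Cross product on `ℝ³`. -/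
def cross3 (a b : Fin 3 → ℝ) : Fin 3 → ℝ :=
  ![a 1 * b 2 - a 2 * b 1, a 2 * b 0 - a 0 * b 2, a 0 * b 1 - a 1 * b 0]

/-- Partial derivative in the `i`-th coordinate of a scalar function on `ℝ³`. -/
def pd (i : Fin 3) (f : (Fin 3 → ℝ) → ℝ) (x : Fin 3 → ℝ) : ℝ :=
  fderiv ℝ f x (Pi.single i 1)

/-- Gradient of a scalar function on `ℝ³`. -/
def grad3 (f : (Fin 3 → ℝ) → ℝ) (x : Fin 3 → ℝ) : Fin 3 → ℝ := fun i => pd i f x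

/-- Divergence of a vector field on `ℝ³`. -/
def div3 (F : (Fin 3 → ℝ) → Fin 3 → ℝ) (x : Fin 3 → ℝ) : ℝ :=
  ∑ i, pd i (fun y => F y i) x

/-- Curl of a vector field on `ℝ³`. -/
def curl3 (F : (Fin 3 → ℝ) → Fin 3 → ℝ) (x : Fin 3 → ℝ) : Fin 3 → ℝ :=
  ![pd 1 (fun y => F y 2) x - pd 2 (fun y => F y 1) x,
    pd 2 (fun y => F y 0) x - pd 0 (fun y => F y 2) x,
    pd 0 (fun y => F y 1) x - pd 1 (fun y => F y 0) x]

/-- Hessian bilinear form of a scalar function on `ℝ³`. -/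
def hess3 (f : (Fin 3 → ℝ) → ℝ) (x : Fin 3 → ℝ) (a b : Fin 3 → ℝ) : ℝ :=
  ∑ i, ∑ j, pd i (pd j f) x * a i * b j

/-- Laplacian of a scalar function on `ℝ³`. -/
def lap3 (f : (Fin 3 → ℝ) → ℝ) (x : Fin 3 → ℝ) : ℝ :=
  ∑ i, pd i (pd i f) x

/-- Directional derivative `(b·∇)F` of a vector field on `ℝ³`. -/
def dirD (b : Fin 3 → ℝ) (F : (Fin 3 → ℝ) → Fin 3 → ℝ) (x : Fin 3 → ℝ) : Fin 3 → ℝ :=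
  fun k => ∑ i, b i * pd i (fun y => F y k) x

open Matrix

lemma dot3_eq_dotProduct (a b : Fin 3 → ℝ) : dot3 a b = a ⬝ᵥ b := rfl

lemma cross3_eq_crossProduct (a b : Fin 3 → ℝ) : cross3 a b = a ⨯₃ b := by
  rw [cross_apply]; rfl

lemma DifferentiableAt.dotProduct {𝕜 E ι : Type*} [NontriviallyNormedField 𝕜]
    [NormedAddCommGroup E] [NormedSpace 𝕜 E] [Fintype ι] {F G : E → ι → 𝕜} {x : E}
    (hF : DifferentiableAt 𝕜 F x) (hG : DifferentiableAt 𝕜 G x) :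
    DifferentiableAt 𝕜 (fun y => F y ⬝ᵥ G y) x :=
  DifferentiableAt.fun_sum fun k _ =>
    (differentiableAt_pi.mp hF k).mul (differentiableAt_pi.mp hG k)

section PartialDerivatives

variable {f g : (Fin 3 → ℝ) → ℝ} {F G : (Fin 3 → ℝ) → Fin 3 → ℝ} {x : Fin 3 → ℝ} {i : Fin 3}

lemma pd_sub (hf : DifferentiableAt ℝ f x) (hg : DifferentiableAt ℝ g x) :
    pd i (fun y => f y - g y) x = pd i f x - pd i g x := by
  simp [pd, fderiv_fun_sub hf hg]

lemma pd_mul (hf : DifferentiableAt ℝ f x) (hg : DifferentiableAt ℝ g x) :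
    pd i (fun y => f y * g y) x = pd i f x * g x + f x * pd i g x := by
  simp only [pd, fderiv_fun_mul hf hg, _root_.add_apply, _root_.smul_apply, smul_eq_mul]
  ring

lemma pd_sum {ι : Type*} (s : Finset ι) {φ : ι → (Fin 3 → ℝ) → ℝ}
    (hφ : ∀ k ∈ s, DifferentiableAt ℝ (φ k) x) :
    pd i (fun y => ∑ k ∈ s, φ k y) x = ∑ k ∈ s, pd i (φ k) x := by
  simp [pd, fderiv_fun_sum hφ]

lemma pd_dotProduct (hF : DifferentiableAt ℝ F x) (hG : DifferentiableAt ℝ G x) :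
    pd i (fun y => F y ⬝ᵥ G y) x
      = ∑ k, (pd i (fun y => F y k) x * G x k + F x k * pd i (fun y => G y k) x) := by
  have hFk := differentiableAt_pi.mp hF
  have hGk := differentiableAt_pi.mp hG
  simp only [dotProduct]
  rw [pd_sum (φ := fun k y => F y k * G y k) _ fun k _ => (hFk k).mul (hGk k)]
  exact Finset.sum_congr rfl fun k _ => pd_mul (hFk k) (hGk k)

lemma differentiableAt_grad3 (h : DifferentiableAt ℝ (fderiv ℝ f) x) :
    DifferentiableAt ℝ (grad3 f) x :=
  differentiableAt_pi.mpr fun _ => h.clm_apply (differentiableAt_const _)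

end PartialDerivatives

section VectorCalculus

variable {f : (Fin 3 → ℝ) → ℝ} {F G : (Fin 3 → ℝ) → Fin 3 → ℝ} {x : Fin 3 → ℝ}

lemma div3_sub (hF : DifferentiableAt ℝ F x) (hG : DifferentiableAt ℝ G x) :
    div3 (fun y => F y - G y) x = div3 F x - div3 G x := by
  simp only [div3, Pi.sub_apply, ← Finset.sum_sub_distrib]
  exact Finset.sum_congr rfl fun i _ =>
    pd_sub (differentiableAt_pi.mp hF i) (differentiableAt_pi.mp hG i)

lemma div3_smul (hf : DifferentiableAt ℝ f x) (hF : DifferentiableAt ℝ F x) :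
    div3 (fun y => f y • F y) x = grad3 f x ⬝ᵥ F x + f x * div3 F x := by
  simp only [div3, dotProduct, grad3, Pi.smul_apply, smul_eq_mul, Finset.mul_sum,
    ← Finset.sum_add_distrib]
  exact Finset.sum_congr rfl fun i _ => pd_mul hf (differentiableAt_pi.mp hF i)

lemma dotProduct_grad3_dotProduct (b : Fin 3 → ℝ) (hF : DifferentiableAt ℝ F x)
    (hG : DifferentiableAt ℝ G x) :
    b ⬝ᵥ grad3 (fun y => F y ⬝ᵥ G y) x = dirD b F x ⬝ᵥ G x + F x ⬝ᵥ dirD b G x := by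
  unfold grad3
  simp only [pd_dotProduct hF hG]
  simp only [dirD, dotProduct, Fin.sum_univ_three]
  ring

lemma dirD_grad3_dotProduct (a b : Fin 3 → ℝ) :
    dirD a (grad3 f) x ⬝ᵥ b = hess3 f x a b := by
  simp only [dirD, grad3, hess3, dotProduct, Fin.sum_univ_three]
  ring

lemma cross_curl3 (hF : DifferentiableAt ℝ F x) :
    F x ⨯₃ curl3 F x = (1 / 2 : ℝ) • grad3 (fun y => F y ⬝ᵥ F y) x - dirD (F x) F x := by
  ext j
  fin_cases j <;>
  · simp only [cross_apply, curl3, grad3, dirD, pd_dotProduct hF hF, Fin.sum_univ_three,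
      Fin.isValue, Fin.zero_eta, Fin.mk_one, Fin.reduceFinMk, cons_val, cons_val_one,
      cons_val_zero, Pi.sub_apply, Pi.smul_apply, smul_eq_mul]
    ring

end VectorCalculus

/-- For a divergence-free `C¹` field `z` and a `C²` function `ℓ`:
`−(∇ℓ × z) · curl z = −div(z × (∇ℓ × z)) + (1/2) Δℓ |z|² + (1/2) div(∇ℓ|z|²) − Hess ℓ(z,z)`. -/
theorem neg_gradCross_dot_curl
    (z : (Fin 3 → ℝ) → Fin 3 → ℝ) (ℓ : (Fin 3 → ℝ) → ℝ) (x : Fin 3 → ℝ)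
    (hz : ContDiffAt ℝ 1 z x) (hdiv : div3 z x = 0) (hℓ : ContDiffAt ℝ 2 ℓ x) :
    -(dot3 (cross3 (grad3 ℓ x) (z x)) (curl3 z x))
      = -(div3 (fun x' => cross3 (z x') (cross3 (grad3 ℓ x') (z x'))) x)
        + (1/2 : ℝ) * lap3 ℓ x * dot3 (z x) (z x)
        + (1/2 : ℝ) * div3 (fun x' => dot3 (z x') (z x') • grad3 ℓ x') x
        - hess3 ℓ x (z x) (z x) := by
  have hz' : DifferentiableAt ℝ z x := hz.differentiableAt one_ne_zero
  have hℓ' : DifferentiableAt ℝ (grad3 ℓ) x :=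
    differentiableAt_grad3 ((hℓ.fderiv_right le_rfl).differentiableAt one_ne_zero)
  have hbac : (fun y => z y ⨯₃ (grad3 ℓ y ⨯₃ z y))
      = fun y => (z y ⬝ᵥ z y) • grad3 ℓ y - (grad3 ℓ y ⬝ᵥ z y) • z y :=
    funext fun y => cross_cross_eq_smul_sub_smul' _ _ _
  have hdiv_sq : div3 (fun y => (z y ⬝ᵥ z y) • grad3 ℓ y) x
      = grad3 (fun y => z y ⬝ᵥ z y) x ⬝ᵥ grad3 ℓ x + (z x ⬝ᵥ z x) * lap3 ℓ x :=
    div3_smul (hz'.dotProduct hz') hℓ'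
  have hdiv_proj : div3 (fun y => (grad3 ℓ y ⬝ᵥ z y) • z y) x
      = hess3 ℓ x (z x) (z x) + grad3 ℓ x ⬝ᵥ dirD (z x) z x := by
    rw [div3_smul (hℓ'.dotProduct hz') hz', hdiv, mul_zero, add_zero, dotProduct_comm,
      dotProduct_grad3_dotProduct _ hℓ' hz', dirD_grad3_dotProduct]
  have hlamb : (grad3 ℓ x ⨯₃ z x) ⬝ᵥ curl3 z x
      = grad3 ℓ x ⬝ᵥ ((1 / 2 : ℝ) • grad3 (fun y => z y ⬝ᵥ z y) x - dirD (z x) z x) := by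
    rw [← cross_curl3 hz', dotProduct_comm, triple_product_permutation]
  simp only [dot3_eq_dotProduct, cross3_eq_crossProduct]
  rw [hbac, div3_sub ((hz'.dotProduct hz').fun_smul hℓ') ((hℓ'.dotProduct hz').fun_smul hz'),
    hdiv_sq, hdiv_proj, hlamb, dotProduct_sub, dotProduct_smul, smul_eq_mul,
    dotProduct_comm (grad3 ℓ x)]
  ring

end
end

section
/- Let T > 0, M > 0, c₁ > 0, λ > 0, and α ∈ ℝ. Define β(t) = (1/2)αλ²e^{αλ} − (2c₁²λ²(t − T/2)² + c₁λ + (c₁λ/(2M))|t − T/2|) e^{c₁λ(t − T/2)²}. Then β(0) = β(T), and for every t ∈ [0, T] one has β(t) ≥ β(0); that is, β attains its minimum over [0,T] at the endpoints, with β(0) = β(T) = (1/2)αλ²e^{αλ} − ((1/2)c₁²T²λ² + c₁λ + (T/(4M))c₁λ) e^{c₁λT²/4}. -/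
/-- The weight function `β` attains its minimum over `[0,T]` at the
endpoints, with the stated common value there. -/
theorem beta_min_at_endpoints (T M c₁ lam α : ℝ)
    (hT : 0 < T) (hM : 0 < M) (hc : 0 < c₁) (hlam : 0 < lam) :
    let β : ℝ → ℝ := fun t =>
      (1/2) * α * lam ^ 2 * Real.exp (α * lam)
        - (2 * c₁ ^ 2 * lam ^ 2 * (t - T/2) ^ 2 + c₁ * lam + (c₁ * lam / (2 * M)) * |t - T/2|)
            * Real.exp (c₁ * lam * (t - T/2) ^ 2)
    β 0 = β T ∧
    (∀ t ∈ Set.Icc (0:ℝ) T, β 0 ≤ β t) ∧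
    β 0 = (1/2) * α * lam ^ 2 * Real.exp (α * lam)
        - ((1/2) * c₁ ^ 2 * T ^ 2 * lam ^ 2 + c₁ * lam + (T / (4 * M)) * c₁ * lam)
            * Real.exp (c₁ * lam * T ^ 2 / 4) := by
  intro β
  have habs0 : |(0:ℝ) - T/2| = T/2 := by
    rw [abs_of_nonpos (by linarith)]; ring
  have habsT : |T - T/2| = T/2 := by
    rw [abs_of_nonneg (by linarith)]; ring
  have he0 : c₁ * lam * ((0:ℝ) - T/2) ^ 2 = c₁ * lam * T ^ 2 / 4 := by ring
  have heT : c₁ * lam * (T - T/2) ^ 2 = c₁ * lam * T ^ 2 / 4 := by ring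
  have hval : β 0 = (1/2) * α * lam ^ 2 * Real.exp (α * lam)
      - ((1/2) * c₁ ^ 2 * T ^ 2 * lam ^ 2 + c₁ * lam + (T / (4 * M)) * c₁ * lam)
          * Real.exp (c₁ * lam * T ^ 2 / 4) := by
    simp only [β, habs0, he0]
    have : 2 * c₁ ^ 2 * lam ^ 2 * ((0:ℝ) - T/2) ^ 2 + c₁ * lam + (c₁ * lam / (2 * M)) * (T/2)
        = (1/2) * c₁ ^ 2 * T ^ 2 * lam ^ 2 + c₁ * lam + (T / (4 * M)) * c₁ * lam := by
      field_simp; ring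
    rw [this]
  have hvalT : β T = (1/2) * α * lam ^ 2 * Real.exp (α * lam)
      - ((1/2) * c₁ ^ 2 * T ^ 2 * lam ^ 2 + c₁ * lam + (T / (4 * M)) * c₁ * lam)
          * Real.exp (c₁ * lam * T ^ 2 / 4) := by
    simp only [β, habsT, heT]
    have : 2 * c₁ ^ 2 * lam ^ 2 * (T - T/2) ^ 2 + c₁ * lam + (c₁ * lam / (2 * M)) * (T/2)
        = (1/2) * c₁ ^ 2 * T ^ 2 * lam ^ 2 + c₁ * lam + (T / (4 * M)) * c₁ * lam := by
      field_simp; ring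
    rw [this]
  refine ⟨hval.trans hvalT.symm, ?_, hval⟩
  intro t ht
  obtain ⟨ht0, htT⟩ := ht
  rw [hval]
  show _ ≤ (1/2) * α * lam ^ 2 * Real.exp (α * lam)
      - (2 * c₁ ^ 2 * lam ^ 2 * (t - T/2) ^ 2 + c₁ * lam + (c₁ * lam / (2 * M)) * |t - T/2|)
          * Real.exp (c₁ * lam * (t - T/2) ^ 2)
  have hs : |t - T/2| ≤ T/2 := by
    rw [abs_le]; constructor <;> linarith
  have hs2 : (t - T/2) ^ 2 ≤ (T/2) ^ 2 := by
    rw [← sq_abs]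
    exact pow_le_pow_left₀ (abs_nonneg _) hs 2
  have hk : 0 ≤ c₁ * lam / (2 * M) := by positivity
  have hmul : (2 * c₁ ^ 2 * lam ^ 2 * (t - T/2) ^ 2 + c₁ * lam + (c₁ * lam / (2 * M)) * |t - T/2|)
        * Real.exp (c₁ * lam * (t - T/2) ^ 2)
      ≤ ((1/2) * c₁ ^ 2 * T ^ 2 * lam ^ 2 + c₁ * lam + (T / (4 * M)) * c₁ * lam)
        * Real.exp (c₁ * lam * T ^ 2 / 4) := by
    apply mul_le_mul
    · have h1 : 2 * c₁ ^ 2 * lam ^ 2 * (t - T/2) ^ 2 ≤ (1/2) * c₁ ^ 2 * T ^ 2 * lam ^ 2 := by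
        have := mul_le_mul_of_nonneg_left hs2 (show (0:ℝ) ≤ 2*c₁^2*lam^2 by positivity)
        nlinarith [this]
      have h2 : (c₁ * lam / (2 * M)) * |t - T/2| ≤ (T / (4 * M)) * c₁ * lam := by
        have := mul_le_mul_of_nonneg_left hs hk
        calc (c₁ * lam / (2 * M)) * |t - T/2| ≤ (c₁ * lam / (2 * M)) * (T/2) := this
          _ = (T / (4 * M)) * c₁ * lam := by field_simp; ring
      linarith
    · apply Real.exp_le_exp.2
      have : c₁ * lam * (t - T/2) ^ 2 ≤ c₁ * lam * (T/2) ^ 2 :=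
        mul_le_mul_of_nonneg_left hs2 (by positivity)
      calc c₁ * lam * (t - T/2) ^ 2 ≤ c₁ * lam * (T/2)^2 := this
        _ = c₁ * lam * T ^ 2 / 4 := by ring
    · positivity
    · positivity
  linarith
end

section
/- Let T > 0, M > 0, c₁ > 0, λ ≥ 1, and let α ∈ ℝ satisfy α ≥ max{9c₁²T², (1/4)c₁T², c₁TM, (9/(2M))c₁T, (1/2)c₁T, 18c₁}. Then (1/2)αλ²e^{αλ} − ((1/2)c₁²T²λ² + c₁λ + (T/(4M))c₁λ) e^{c₁λT²/4} ≥ (1/3)αλ²e^{αλ}. -/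
/-- Lower bound for the minimum of the weight `β`:
`β_min ≥ (1/3) α λ² e^{αλ}` under the stated largeness condition on `α`. -/
theorem beta_min_lower_bound (T M c₁ lam α : ℝ)
    (hT : 0 < T) (hM : 0 < M) (hc : 0 < c₁) (hlam : 1 ≤ lam)
    (hα : α ≥ max (9 * c₁ ^ 2 * T ^ 2) (max ((1/4) * c₁ * T ^ 2) (max (c₁ * T * M)
          (max ((9 / (2 * M)) * c₁ * T) (max ((1/2) * c₁ * T) (18 * c₁)))))) :
    (1/2) * α * lam ^ 2 * Real.exp (α * lam)
        - ((1/2) * c₁ ^ 2 * T ^ 2 * lam ^ 2 + c₁ * lam + (T / (4 * M)) * c₁ * lam)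
            * Real.exp (c₁ * lam * T ^ 2 / 4)
      ≥ (1/3) * α * lam ^ 2 * Real.exp (α * lam) := by
  have h1 : 9 * c₁ ^ 2 * T ^ 2 ≤ α := le_trans (le_max_left _ _) hα
  have h2 : (1/4) * c₁ * T ^ 2 ≤ α := by
    refine le_trans ?_ hα
    exact le_max_of_le_right (le_max_left _ _)
  have h4 : (9 / (2 * M)) * c₁ * T ≤ α := by
    refine le_trans ?_ hα
    exact le_max_of_le_right (le_max_of_le_right (le_max_of_le_right (le_max_left _ _)))
  have h6 : 18 * c₁ ≤ α := by
    refine le_trans ?_ hα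
    exact le_max_of_le_right (le_max_of_le_right (le_max_of_le_right
      (le_max_of_le_right (le_max_right _ _))))
  have hα0 : (0:ℝ) < α := lt_of_lt_of_le (by positivity) h6
  have hlam0 : (0:ℝ) < lam := lt_of_lt_of_le one_pos hlam
  have h4' : 9 * c₁ * T ≤ 2 * α * M := by
    have hM2 : (0:ℝ) < 2 * M := by linarith
    rw [div_mul_eq_mul_div, div_mul_eq_mul_div, div_le_iff₀ hM2] at h4
    nlinarith
  have hE : Real.exp (c₁ * lam * T ^ 2 / 4) ≤ Real.exp (α * lam) := by
    apply Real.exp_le_exp.mpr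
    nlinarith [mul_le_mul_of_nonneg_right h2 hlam0.le]
  have hC : (1/2) * c₁ ^ 2 * T ^ 2 * lam ^ 2 + c₁ * lam + (T / (4 * M)) * c₁ * lam
      ≤ (1/6) * α * lam ^ 2 := by
    have hTM : (T / (4 * M)) * c₁ * lam ≤ (1/18) * α * lam ^ 2 := by
      rw [div_mul_eq_mul_div, div_mul_eq_mul_div, div_le_iff₀ (by linarith : (0:ℝ) < 4 * M)]
      nlinarith [mul_le_mul_of_nonneg_right h4' hlam0.le,
        mul_le_mul_of_nonneg_left hlam (show (0:ℝ) ≤ 2 * α * M * lam from by positivity)]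
    nlinarith [mul_le_mul_of_nonneg_right h1 (mul_pos hlam0 hlam0).le,
      mul_le_mul_of_nonneg_right h6 hlam0.le, sq_nonneg (lam - 1), hlam0.le]
  have hCpos : 0 ≤ (1/2) * c₁ ^ 2 * T ^ 2 * lam ^ 2 + c₁ * lam + (T / (4 * M)) * c₁ * lam := by
    positivity
  have hE0 : 0 < Real.exp (α * lam) := Real.exp_pos _
  nlinarith [mul_le_mul hC hE (Real.exp_pos _).le (by positivity : (0:ℝ) ≤ (1/6) * α * lam ^ 2)]
end

section
/- Let V, P, Q, S_f, S_g, S₁, S_r be real matrices and ξ a real vector of compatible dimensions: V is p × a, P is q × b, Q is q × c, S_f is r × a, S_g is r × b, S₁ is r × d, S_r is r × e, and ξ ∈ ℝʳ. Assume that VVᵀ, PPᵀ + QQᵀ, and W := S_fS_fᵀ + S_gS_gᵀ + S₁S₁ᵀ + S_rS_rᵀ − S_fVᵀ(VVᵀ)⁻¹VS_fᵀ − S_gPᵀ(PPᵀ + QQᵀ)⁻¹PS_gᵀ are invertible. Define λ₃ = W⁻¹ξ, λ₁ = −(VVᵀ)⁻¹VS_fᵀλ₃, λ₂ = −(PPᵀ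 + QQᵀ)⁻¹PS_gᵀλ₃, and set f = Vᵀλ₁ + S_fᵀλ₃, g = Pᵀλ₂ + S_gᵀλ₃, g₊ = Qᵀλ₂, E = S₁ᵀλ₃, R = S_rᵀλ₃. Then (f, g, g₊, E, R) satisfies the constraint system: V f = 0, P g + Q g₊ = 0, and S_f f + S_g g + S₁ E + S_r R = ξ. (This verifies that the Lagrange-multiplier formulas of the numerical algorithm produce controls satisfying the discrete divergence-free conditions and the discrete exact-controllability condition.) -/
open Matrix

/-- The Lagrange-multiplier formulas of the numerical algorithm produce
controls satisfying the discrete divergence-free conditions and the discrete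
exact-controllability condition. -/
theorem lagrange_multiplier_solution
    (p q r a b c d e : ℕ)
    (V : Matrix (Fin p) (Fin a) ℝ) (P : Matrix (Fin q) (Fin b) ℝ)
    (Q : Matrix (Fin q) (Fin c) ℝ)
    (Sf : Matrix (Fin r) (Fin a) ℝ) (Sg : Matrix (Fin r) (Fin b) ℝ)
    (S1 : Matrix (Fin r) (Fin d) ℝ) (Sr : Matrix (Fin r) (Fin e) ℝ)
    (ξ : Fin r → ℝ)
    (hV : IsUnit (V * Vᵀ)) (hPQ : IsUnit (P * Pᵀ + Q * Qᵀ))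
    (W : Matrix (Fin r) (Fin r) ℝ)
    (hW : W = Sf * Sfᵀ + Sg * Sgᵀ + S1 * S1ᵀ + Sr * Srᵀ
        - Sf * Vᵀ * (V * Vᵀ)⁻¹ * (V * Sfᵀ)
        - Sg * Pᵀ * (P * Pᵀ + Q * Qᵀ)⁻¹ * (P * Sgᵀ))
    (hWu : IsUnit W) :
    let l3 : Fin r → ℝ := W⁻¹.mulVec ξ
    let l1 : Fin p → ℝ := -(((V * Vᵀ)⁻¹ * (V * Sfᵀ)).mulVec l3)
    let l2 : Fin q → ℝ := -(((P * Pᵀ + Q * Qᵀ)⁻¹ * (P * Sgᵀ)).mulVec l3)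
    let f : Fin a → ℝ := Vᵀ.mulVec l1 + Sfᵀ.mulVec l3
    let g : Fin b → ℝ := Pᵀ.mulVec l2 + Sgᵀ.mulVec l3
    let gStar : Fin c → ℝ := Qᵀ.mulVec l2
    let E : Fin d → ℝ := S1ᵀ.mulVec l3
    let R : Fin e → ℝ := Srᵀ.mulVec l3
    V.mulVec f = 0 ∧
    P.mulVec g + Q.mulVec gStar = 0 ∧
    Sf.mulVec f + Sg.mulVec g + S1.mulVec E + Sr.mulVec R = ξ := by
  intro l3 l1 l2 f g gStar E R
  have hVd : (V * Vᵀ) * (V * Vᵀ)⁻¹ = 1 :=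
    Matrix.mul_nonsing_inv _ ((Matrix.isUnit_iff_isUnit_det _).mp hV)
  have hPQd : (P * Pᵀ + Q * Qᵀ) * (P * Pᵀ + Q * Qᵀ)⁻¹ = 1 :=
    Matrix.mul_nonsing_inv _ ((Matrix.isUnit_iff_isUnit_det _).mp hPQ)
  have hWd : W * W⁻¹ = 1 :=
    Matrix.mul_nonsing_inv _ ((Matrix.isUnit_iff_isUnit_det _).mp hWu)
  refine ⟨?_, ?_, ?_⟩
  · show V.mulVec (Vᵀ.mulVec l1 + Sfᵀ.mulVec l3) = 0
    simp only [l1, Matrix.mulVec_add, Matrix.mulVec_neg, Matrix.mulVec_mulVec,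
      ← Matrix.mul_assoc]
    rw [hVd, Matrix.one_mul, neg_add_cancel]
  · show P.mulVec (Pᵀ.mulVec l2 + Sgᵀ.mulVec l3) + Q.mulVec (Qᵀ.mulVec l2) = 0
    simp only [l2, Matrix.mulVec_add, Matrix.mulVec_neg, Matrix.mulVec_mulVec,
      ← Matrix.mul_assoc]
    have hg : P * Pᵀ * (P * Pᵀ + Q * Qᵀ)⁻¹ * P * Sgᵀ
        + Q * Qᵀ * (P * Pᵀ + Q * Qᵀ)⁻¹ * P * Sgᵀ = P * Sgᵀ := by
      rw [← Matrix.add_mul, ← Matrix.add_mul, ← Matrix.add_mul, hPQd,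
        Matrix.one_mul]
    rw [← hg]
    simp only [Matrix.add_mulVec]
    abel
  · show Sf.mulVec f + Sg.mulVec g + S1.mulVec E + Sr.mulVec R = ξ
    simp only [f, g, E, R, l1, l2, Matrix.mulVec_add, Matrix.mulVec_neg,
      Matrix.mulVec_mulVec, ← Matrix.mul_assoc, ← Matrix.neg_mulVec,
      ← Matrix.add_mulVec]
    have hM : Sf * (Vᵀ * -((V * Vᵀ)⁻¹ * V * Sfᵀ) + Sfᵀ)
        + Sg * (Pᵀ * -((P * Pᵀ + Q * Qᵀ)⁻¹ * P * Sgᵀ) + Sgᵀ)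
        + S1 * S1ᵀ + Sr * Srᵀ = W := by
      rw [hW]
      simp only [Matrix.mul_add, Matrix.mul_neg, ← Matrix.mul_assoc, sub_eq_add_neg]
      abel
    rw [hM]
    show W *ᵥ (W⁻¹ *ᵥ ξ) = ξ
    rw [Matrix.mulVec_mulVec, hWd, Matrix.one_mulVec]
end
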